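/- Let C be a binary singly-even self-dual code of length n divisible by 4 and dimension k = n/2. Then there exists a chain of subcodes C_1 = ⟨1⟩ ⊂ C_2 ⊂ ... ⊂ C_{k-1} ⊂ C with dim C_i = i, where each C_i is self-orthogonal and doubly even (all codewords have weight divisible by 4). -/

import Mathlib

open Finset

/-- Hamming weight of a binary vector. -/
def wt {ι : Type*} [Fintype ι] (x : ι → ZMod 2) : ℕ :=
  (Finset.univ.filter (fun i => x i = 1)).card

/-- Number of coordinates equal to 1 in both `x` and `y`. -/
def mu {ι : Type*} [Fintype ι] (x y : ι → ZMod 2) : ℕ :=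
  (Finset.univ.filter (fun i => x i = 1 ∧ y i = 1)).card

/-- A binary linear code is self-dual if it equals its dual. -/
def IsSelfDual {ι : Type*} [Fintype ι] (C : Submodule (ZMod 2) (ι → ZMod 2)) : Prop :=
  ∀ v, v ∈ C ↔ ∀ x ∈ C, ∑ i, v i * x i = 0

lemma zmod2_cases : ∀ c : ZMod 2, c = 0 ∨ c = 1 := by decide

lemma sum_eq_wt {ι : Type*} [Fintype ι] (x : ι → ZMod 2) :
    ∑ i, x i = (wt x : ZMod 2) := by
  have h : ∀ a : ZMod 2, a = if a = 1 then 1 else 0 := by decide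
  rw [wt, ← Finset.sum_boole]
  exact Finset.sum_congr rfl fun i _ => h (x i)

lemma sum_mul_eq_mu {ι : Type*} [Fintype ι] (x y : ι → ZMod 2) :
    ∑ i, x i * y i = (mu x y : ZMod 2) := by
  have h : ∀ a b : ZMod 2, a * b = if a = 1 ∧ b = 1 then 1 else 0 := by decide
  rw [mu, ← Finset.sum_boole]
  exact Finset.sum_congr rfl fun i _ => h (x i) (y i)

lemma wt_add_aux {ι : Type*} [Fintype ι] (x y : ι → ZMod 2) :
    wt (x + y) + 2 * mu x y = wt x + wt y := by
  classical
  set A := univ.filter (fun i => x i = 1) with hA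
  set B := univ.filter (fun i => y i = 1) with hB
  have key : ∀ a b : ZMod 2, (a + b = 1) ↔ ((a = 1 ∧ ¬ b = 1) ∨ (b = 1 ∧ ¬ a = 1)) := by decide
  have hxy : univ.filter (fun i => (x + y) i = 1) = (A \ B) ∪ (B \ A) := by
    ext i
    simp only [hA, hB, Finset.mem_filter, Finset.mem_union, Finset.mem_sdiff, Finset.mem_univ,
      true_and, Pi.add_apply, key]
  have hmu : univ.filter (fun i => x i = 1 ∧ y i = 1) = A ∩ B := by
    ext i
    simp [hA, hB]
  have hd : Disjoint (A \ B) (B \ A) := disjoint_sdiff_sdiff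
  have h1 : wt (x + y) = (A \ B).card + (B \ A).card := by
    rw [wt, hxy, Finset.card_union_of_disjoint hd]
  have h2 : (A \ B).card + (A ∩ B).card = A.card := Finset.card_sdiff_add_card_inter A B
  have h3 : (B \ A).card + (B ∩ A).card = B.card := Finset.card_sdiff_add_card_inter B A
  have h4 : (A ∩ B).card = (B ∩ A).card := by rw [Finset.inter_comm]
  have h5 : mu x y = (A ∩ B).card := by rw [mu, hmu]
  have h6 : wt x = A.card := rfl
  have h7 : wt y = B.card := rfl
  omega

/-- The doubly-even subcode of a self-orthogonal code. -/
def evenSub {n : ℕ} (C : Submodule (ZMod 2) (Fin n → ZMod 2))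
    (hmu : ∀ x ∈ C, ∀ y ∈ C, 2 ∣ mu x y) : Submodule (ZMod 2) (Fin n → ZMod 2) where
  carrier := {v | v ∈ C ∧ wt v % 4 = 0}
  add_mem' := by
    rintro x y ⟨hx, hx4⟩ ⟨hy, hy4⟩
    refine ⟨C.add_mem hx hy, ?_⟩
    have h1 := wt_add_aux x y
    have h2 := hmu x hx y hy
    omega
  zero_mem' := ⟨C.zero_mem, by simp [wt]⟩
  smul_mem' := by
    intro a x hx
    rcases zmod2_cases a with rfl | rfl
    · rw [zero_smul]
      exact ⟨C.zero_mem, by simp [wt]⟩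
    · rw [one_smul]
      exact hx

lemma mem_evenSub {n : ℕ} {C : Submodule (ZMod 2) (Fin n → ZMod 2)}
    {hmu : ∀ x ∈ C, ∀ y ∈ C, 2 ∣ mu x y} {v : Fin n → ZMod 2} :
    v ∈ evenSub C hmu ↔ v ∈ C ∧ wt v % 4 = 0 := Iff.rfl

/-- A chain of subspaces between two nested subspaces. -/
lemma exists_chain {K M : Type*} [DivisionRing K] [AddCommGroup M] [Module K M]
    [FiniteDimensional K M] :
    ∀ (m : ℕ) (V W : Submodule K M), V ≤ W →
      Module.finrank K V + m = Module.finrank K W →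
      ∃ f : Fin (m + 1) → Submodule K M,
        f 0 = V ∧ f (Fin.last m) = W ∧ StrictMono f ∧
        ∀ i : Fin (m + 1), Module.finrank K (f i) = Module.finrank K V + i := by
  intro m
  induction m with
  | zero =>
    intro V W hle hr
    have hVW : V = W := Submodule.eq_of_le_of_finrank_eq hle (by omega)
    have hss : ∀ a b : Fin (0 + 1), a = b := fun a b =>
      Fin.ext (by have := a.isLt; have := b.isLt; omega)
    refine ⟨fun _ => V, rfl, hVW, fun a b h => (lt_irrefl a ((hss a b) ▸ h)).elim,
      fun i => by rw [hss i 0]; simp⟩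
  | succ m ih =>
    intro V W hle hr
    have hfW : Module.finrank K V < Module.finrank K W := by omega
    have hVW : V < W := lt_of_le_of_ne hle (by rintro rfl; omega)
    obtain ⟨w, hwW, hwV⟩ := SetLike.exists_of_lt hVW
    have hw0 : w ≠ 0 := fun h => hwV (h ▸ V.zero_mem)
    set V' := V ⊔ Submodule.span K {w} with hV'
    have hspanle : Submodule.span K {w} ≤ W := by
      rw [Submodule.span_le, Set.singleton_subset_iff]; exact hwW
    have hV'le : V' ≤ W := sup_le hle hspanle
    have hltV' : V < V' := lt_of_le_of_ne le_sup_left (by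
      intro h
      exact hwV (h ▸ (le_sup_right : Submodule.span K {w} ≤ V')
        (Submodule.mem_span_singleton_self w)))
    have hrV' : Module.finrank K V' = Module.finrank K V + 1 := by
      have e := Submodule.finrank_sup_add_finrank_inf_eq V (Submodule.span K {w})
      rw [finrank_span_singleton hw0, ← hV'] at e
      have := Submodule.finrank_lt_finrank_of_lt hltV'
      omega
    obtain ⟨g, hg0, hglast, hgmono, hgrank⟩ := ih V' W hV'le (by omega)
    refine ⟨Fin.cons V g, ?_, ?_, ?_, ?_⟩
    · simp
    · simp only [← Fin.succ_last, Fin.cons_succ]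
      exact hglast
    · rw [Fin.strictMono_iff_lt_succ]
      intro i
      induction i using Fin.cases with
      | zero =>
        simp only [Fin.castSucc_zero, Fin.cons_zero, Fin.cons_succ, hg0]
        exact hltV'
      | succ j =>
        simp only [← Fin.succ_castSucc, Fin.cons_succ]
        exact hgmono (Fin.castSucc_lt_succ (i := j))
    · intro i
      induction i using Fin.cases with
      | zero =>
        rw [Fin.cons_zero]
        simp
      | succ j =>
        rw [Fin.cons_succ, hgrank j, hrV', Fin.val_succ]
        omega

theorem stmt_7 {n k : ℕ} (hn : n = 2 * k) (hn4 : n % 4 = 0)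
    (C : Submodule (ZMod 2) (Fin n → ZMod 2)) (hC : IsSelfDual C)
    (hk : Module.finrank (ZMod 2) C = k)
    (hsingly : ∃ c ∈ C, wt c % 4 = 2) :
    ∃ D : Fin (k - 1) → Submodule (ZMod 2) (Fin n → ZMod 2),
      (∀ h : 0 < k - 1, D ⟨0, h⟩ = Submodule.span (ZMod 2) {(fun _ => 1 : Fin n → ZMod 2)}) ∧
      StrictMono D ∧
      (∀ i, D i < C) ∧
      (∀ i : Fin (k - 1), Module.finrank (ZMod 2) (D i) = (i : ℕ) + 1) ∧
      (∀ i, ∀ c ∈ D i, wt c % 4 = 0) ∧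
      (∀ i, ∀ x ∈ D i, ∀ y ∈ D i, ∑ j, x j * y j = 0) := by
  classical
  obtain ⟨c, hcC, hc4⟩ := hsingly
  -- inner products vanish on C, so mu is even
  have hmu : ∀ x ∈ C, ∀ y ∈ C, 2 ∣ mu x y := by
    intro x hx y hy
    have h0 : ∑ i, x i * y i = 0 := (hC x).mp hx y hy
    rw [sum_mul_eq_mu] at h0
    exact (ZMod.natCast_eq_zero_iff _ 2).mp h0
  -- weights of codewords are even
  have heven : ∀ x ∈ C, 2 ∣ wt x := by
    intro x hx
    have h0 : ∑ i, x i * x i = 0 := (hC x).mp hx x hx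
    have hxx : ∀ a : ZMod 2, a * a = a := by decide
    rw [Finset.sum_congr rfl fun i _ => hxx (x i), sum_eq_wt] at h0
    exact (ZMod.natCast_eq_zero_iff _ 2).mp h0
  -- the all-ones vector is in C
  set one : Fin n → ZMod 2 := fun _ => 1 with hone
  have honeC : one ∈ C := by
    rw [hC]
    intro x hx
    have : ∀ i, one i * x i = x i := fun i => one_mul _
    rw [Finset.sum_congr rfl fun i _ => this i, sum_eq_wt]
    exact (ZMod.natCast_eq_zero_iff _ 2).mpr (heven x hx)
  have hwone : wt one = n := by
    simp [wt, hone]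
  -- the doubly-even subcode
  set C0 : Submodule (ZMod 2) (Fin n → ZMod 2) := evenSub C hmu with hC0
  have hmemC0 : ∀ v : Fin n → ZMod 2, v ∈ C0 ↔ v ∈ C ∧ wt v % 4 = 0 := fun v => Iff.rfl
  have hC0le : C0 ≤ C := fun v hv => ((hmemC0 v).mp hv).1
  have hcnot : c ∉ C0 := fun h => by have := ((hmemC0 c).mp h).2; omega
  have hC0lt : C0 < C := lt_of_le_of_ne hC0le (fun h => hcnot (h ▸ hcC))
  have honeC0 : one ∈ C0 := (hmemC0 one).mpr ⟨honeC, by rw [hwone]; omega⟩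
  have hc0 : c ≠ 0 := by
    intro h
    rw [h] at hc4
    simp [wt] at hc4
  -- C = C0 ⊔ span {c}
  have hsup : C0 ⊔ Submodule.span (ZMod 2) {c} = C := by
    apply le_antisymm
    · exact sup_le hC0le (by rw [Submodule.span_le, Set.singleton_subset_iff]; exact hcC)
    · intro x hx
      have hx2 := heven x hx
      rcases (by omega : wt x % 4 = 0 ∨ wt x % 4 = 2) with h | h
      · exact Submodule.mem_sup_left ((hmemC0 x).mpr ⟨hx, h⟩)
      · have hxc : x + c ∈ C0 := by
          refine (hmemC0 _).mpr ⟨C.add_mem hx hcC, ?_⟩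
          have h1 := wt_add_aux x c
          have h2 := hmu x hx c hcC
          omega
        have hrw : x = (x + c) + c := by
          funext i
          have : ∀ a b : ZMod 2, a = (a + b) + b := by decide
          exact this (x i) (c i)
        rw [hrw]
        exact Submodule.add_mem _ (Submodule.mem_sup_left hxc)
          (Submodule.mem_sup_right (Submodule.mem_span_singleton_self c))
  have hinf : C0 ⊓ Submodule.span (ZMod 2) {c} = ⊥ := by
    rw [eq_bot_iff]
    rintro x ⟨hx0, hxs⟩
    obtain ⟨a, rfl⟩ := Submodule.mem_span_singleton.mp hxs
    rcases zmod2_cases a with rfl | rfl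
    · simp
    · rw [one_smul] at hx0
      exact absurd hx0 hcnot
  have hrC0 : Module.finrank (ZMod 2) C0 = k - 1 ∧ 1 ≤ k := by
    have e := Submodule.finrank_sup_add_finrank_inf_eq C0 (Submodule.span (ZMod 2) {c})
    rw [hsup, hinf, hk, finrank_span_singleton hc0, finrank_bot] at e
    omega
  rcases Nat.eq_zero_or_pos (k - 1) with hk1 | hk1
  · refine ⟨fun i => (Fin.cast hk1 i).elim0, ?_, ?_, ?_, ?_, ?_, ?_⟩
    · intro h; omega
    · intro a b h; exact (Fin.cast hk1 a).elim0
    · intro i; exact (Fin.cast hk1 i).elim0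
    · intro i; exact (Fin.cast hk1 i).elim0
    · intro i; exact (Fin.cast hk1 i).elim0
    · intro i; exact (Fin.cast hk1 i).elim0
  · obtain ⟨m, hm⟩ : ∃ m, k - 1 = m + 1 := ⟨k - 2, by omega⟩
    have hn0 : 0 < n := by omega
    have hone0 : one ≠ 0 := by
      intro h
      have := congrFun h ⟨0, hn0⟩
      simp [hone] at this
    have hrspan : Module.finrank (ZMod 2) (Submodule.span (ZMod 2) {one}) = 1 :=
      finrank_span_singleton hone0
    have hspanle : Submodule.span (ZMod 2) {one} ≤ C0 := by
      rw [Submodule.span_le, Set.singleton_subset_iff]; exact honeC0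
    obtain ⟨f, hf0, hflast, hfmono, hfrank⟩ :=
      exists_chain m (Submodule.span (ZMod 2) {one}) C0 hspanle (by omega)
    have hfleC0 : ∀ j, f j ≤ C0 := fun j => hflast ▸ hfmono.monotone (Fin.le_last j)
    refine ⟨fun i => f (Fin.cast hm i), ?_, ?_, ?_, ?_, ?_, ?_⟩
    · intro h
      have h0 : Fin.cast hm ⟨0, h⟩ = 0 := by ext; simp
      show f (Fin.cast hm ⟨0, h⟩) = _
      rw [h0, hf0]
    · intro a b h
      exact hfmono h
    · intro i
      exact lt_of_le_of_lt (hfleC0 _) hC0lt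
    · intro i
      show Module.finrank (ZMod 2) (f (Fin.cast hm i)) = _
      rw [hfrank, hrspan, Fin.coe_cast]
      omega
    · intro i x hx
      exact ((hmemC0 x).mp ((hfleC0 _) hx)).2
    · intro i x hx y hy
      exact (hC x).mp (hC0le ((hfleC0 _) hx)) y (hC0le ((hfleC0 _) hy))
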